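/- Every compact subgroup of GL_n(ℚ_p) is contained in a conjugate of GL_n(ℤ_p). -/

import Mathlib

/-!
The `ℤ_[p]`-span `L` of the columns of all elements of `G` is `G`-stable and contains the standard
basis. Compactness of `G` bounds the entries of its elements, so `L` is bounded in `ℚ_[p]ⁿ`, hence
finitely generated over `ℤ_[p]`: `L` is a lattice. A `ℤ_[p]`-basis of `L` is then a `ℚ_[p]`-basis
of `ℚ_[p]ⁿ`, and conjugating by the matrix `g` of this basis turns each `x ∈ G` into the matrix of
`x` in that basis. Since `x` and `x⁻¹` preserve `L`, both matrices have entries in `ℤ_[p]`.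
-/

open Matrix Submodule

theorem Units.mem_range_map_of_injective {M N : Type*} [Monoid M] [Monoid N] {f : M →* N}
    (hf : Function.Injective f) {y : Nˣ} (hy : (y : N) ∈ MonoidHom.mrange f)
    (hy' : ((y⁻¹ : Nˣ) : N) ∈ MonoidHom.mrange f) : y ∈ (Units.map f).range := by
  obtain ⟨a, ha⟩ := hy
  obtain ⟨b, hb⟩ := hy'
  refine ⟨⟨a, b, hf ?_, hf ?_⟩, Units.ext ha⟩ <;> simp [ha, hb]

theorem Module.Basis.extendOfIsLattice_repr {R K V κ : Type*} [CommRing R] [Field K] [Algebra R K]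
    [IsFractionRing R K] [AddCommGroup V] [Module K V] [Module R V] [IsScalarTower R K V]
    {M : Submodule R V} [IsLattice K M] (b : Module.Basis κ R M) (v : M) (i : κ) :
    (b.extendOfIsLattice K).repr v i = algebraMap R K (b.repr v i) := by
  let lhs : M →ₗ[R] K :=
    (Finsupp.lapply i ∘ₗ (b.extendOfIsLattice K).repr.toLinearMap).restrictScalars R ∘ₗ M.subtype
  let rhs : M →ₗ[R] K := Algebra.linearMap R K ∘ₗ b.coord i
  have : lhs = rhs := b.ext fun j => by
    have h := (b.extendOfIsLattice K).repr_self j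
    rw [Module.Basis.extendOfIsLattice_apply] at h
    classical
    simp [lhs, rhs, h, Finsupp.single_apply, apply_ite (algebraMap R K)]
  exact LinearMap.congr_fun this v

namespace Submodule.IsLattice

variable {R K : Type*} [CommRing R] [Field K] [Algebra R K] [IsFractionRing R K]

theorem toMatrix_extendOfIsLattice_mem_range {V κ : Type*} [Fintype κ] [DecidableEq κ]
    [AddCommGroup V] [Module K V] [Module R V] [IsScalarTower R K V]
    {M : Submodule R V} [IsLattice K M] (b : Module.Basis κ R M) {f : V →ₗ[K] V}
    (hf : ∀ v ∈ M, f v ∈ M) :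
    LinearMap.toMatrix (b.extendOfIsLattice K) (b.extendOfIsLattice K) f ∈
      MonoidHom.mrange (algebraMap R K).mapMatrix.toMonoidHom := by
  refine ⟨Matrix.of fun i j => b.repr ⟨f (b j), hf _ (b j).2⟩ i, ?_⟩
  ext i j
  simp only [RingHom.toMonoidHom_eq_coe, MonoidHom.coe_coe, RingHom.mapMatrix_apply, map_apply,
    of_apply, LinearMap.toMatrix_apply, Module.Basis.extendOfIsLattice_apply]
  exact (b.extendOfIsLattice_repr ⟨_, hf _ (b j).2⟩ i).symm

variable [IsDomain R] [IsPrincipalIdealRing R] {ι : Type*} [Fintype ι]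

theorem nonempty_basis (L : Submodule R (ι → K)) [IsLattice K L] :
    Nonempty (Module.Basis ι R L) :=
  ⟨(Module.finBasisOfFinrankEq R L (finrank_of_pi K L)).reindex (Fintype.equivFin ι).symm⟩

theorem exists_conj_mem_range [DecidableEq ι] (L : Submodule R (ι → K)) [IsLattice K L] :
    ∃ g : GL ι K, ∀ x : GL ι K, (∀ v ∈ L, (x : Matrix ι ι K) *ᵥ v ∈ L) →
      (∀ v ∈ L, ((x⁻¹ : GL ι K) : Matrix ι ι K) *ᵥ v ∈ L) →
      g⁻¹ * x * g ∈ (Units.map (algebraMap R K).mapMatrix.toMonoidHom).range := by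
  obtain ⟨b⟩ := nonempty_basis L
  set e := Pi.basisFun K ι
  set bK := b.extendOfIsLattice K
  let g : GL ι K := ⟨e.toMatrix bK, bK.toMatrix e, e.toMatrix_mul_toMatrix_flip bK,
    bK.toMatrix_mul_toMatrix_flip e⟩
  have hconj : ∀ x : GL ι K, ((g⁻¹ * x * g : GL ι K) : Matrix ι ι K) =
      LinearMap.toMatrix bK bK (Matrix.toLin' (x : Matrix ι ι K)) := fun x => by
    rw [← basis_toMatrix_mul_linearMap_toMatrix_mul_basis_toMatrix bK e bK e,
      LinearMap.toMatrix_eq_toMatrix', LinearMap.toMatrix'_toLin']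
    rfl
  have hint : ∀ x : GL ι K, (∀ v ∈ L, (x : Matrix ι ι K) *ᵥ v ∈ L) →
      ((g⁻¹ * x * g : GL ι K) : Matrix ι ι K) ∈
        MonoidHom.mrange (algebraMap R K).mapMatrix.toMonoidHom := fun x hx => by
    rw [hconj]
    exact toMatrix_extendOfIsLattice_mem_range b hx
  refine ⟨g, fun x hx hx' => Units.mem_range_map_of_injective ?_ (hint x hx) ?_⟩
  · exact Matrix.map_injective (IsFractionRing.injective R K)
  · simpa [mul_assoc] using hint x⁻¹ hx'

end Submodule.IsLattice

theorem PadicInt.fg_span_of_isBounded {p : ℕ} [Fact p.Prime] {ι : Type*} [Fintype ι]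
    {S : Set (ι → ℚ_[p])} (hS : Bornology.IsBounded S) : (span ℤ_[p] S).FG := by
  obtain ⟨C, hC0, hC⟩ := hS.exists_pos_norm_le
  obtain ⟨c, hc⟩ := NormedField.exists_lt_norm ℚ_[p] C
  have hc0 : c ≠ 0 := norm_pos_iff.1 (hC0.trans hc)
  let φ : (ι → ℤ_[p]) →ₗ[ℤ_[p]] ι → ℚ_[p] := c • (Algebra.linearMap ℤ_[p] ℚ_[p]).compLeft ι
  refine (Module.Finite.fg_top.map φ).of_le (span_le.2 fun v hv => ?_)
  have hint : ∀ i, ‖c⁻¹ * v i‖ ≤ 1 := fun i => by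
    rw [norm_mul, norm_inv, inv_mul_le_one₀ (hC0.trans hc)]
    exact ((norm_le_pi_norm v i).trans (hC v hv)).trans hc.le
  exact ⟨fun i => ⟨c⁻¹ * v i, hint i⟩, trivial, funext fun i => mul_inv_cancel_left₀ hc0 (v i)⟩

namespace Matrix.GeneralLinearGroup

variable (R : Type*) {K ι : Type*} [CommRing R] [Field K] [Algebra R K] [Fintype ι]
  [DecidableEq ι]

def columnSpan (G : Subgroup (GL ι K)) : Submodule R (ι → K) :=
  span R (⋃ j, (fun x : GL ι K => (x : Matrix ι ι K).col j) '' G)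

variable {R} {G : Subgroup (GL ι K)}

theorem col_mem_columnSpan {x : GL ι K} (hx : x ∈ G) (j : ι) :
    (x : Matrix ι ι K).col j ∈ columnSpan R G :=
  subset_span (Set.mem_iUnion.2 ⟨j, x, hx, rfl⟩)

theorem mulVec_mem_columnSpan {x : GL ι K} (hx : x ∈ G) {v : ι → K}
    (hv : v ∈ columnSpan R G) : (x : Matrix ι ι K) *ᵥ v ∈ columnSpan R G := by
  suffices columnSpan R G ≤
      (columnSpan R G).comap ((x : Matrix ι ι K).mulVecLin.restrictScalars R) from this hv
  refine span_le.2 (Set.iUnion_subset fun j => Set.image_subset_iff.2 fun y hy => ?_)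
  simpa only [Set.mem_preimage, SetLike.mem_coe, mem_comap, LinearMap.restrictScalars_apply,
    mulVecLin_apply, ← mulVec_single_one, mulVec_mulVec, Units.val_mul] using
    col_mem_columnSpan (R := R) (mul_mem hx hy) j

theorem isLattice_columnSpan (hfg : (columnSpan R G).FG) : IsLattice K (columnSpan R G) where
  fg := hfg
  span_eq_top := by
    refine eq_top_iff.2 ((Pi.basisFun K ι).span_eq.symm.le.trans (span_le.2 ?_))
    rintro _ ⟨j, rfl⟩
    have h : Pi.basisFun K ι j = ((1 : GL ι K) : Matrix ι ι K).col j := by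
      rw [← mulVec_single_one, Units.val_one, one_mulVec, Pi.basisFun_apply]
    exact h ▸ subset_span (col_mem_columnSpan G.one_mem j)

theorem fg_columnSpan_of_isCompact {p : ℕ} [Fact p.Prime] {G : Subgroup (GL ι ℚ_[p])}
    (hG : IsCompact (G : Set (GL ι ℚ_[p]))) : (columnSpan ℤ_[p] G).FG :=
  PadicInt.fg_span_of_isBounded <| Bornology.isBounded_iUnion.2 fun j =>
    (hG.image <| continuous_pi fun i => Units.continuous_val.matrix_elem i j).isBounded

end Matrix.GeneralLinearGroup

/-- Every compact subgroup of `GL n ℚ_p` is contained in a conjugate of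
`GL n ℤ_p`. -/
theorem stmt7 (p : ℕ) [Fact p.Prime] (n : ℕ)
    (G : Subgroup (GL (Fin n) ℚ_[p])) (hG : IsCompact (G : Set (GL (Fin n) ℚ_[p]))) :
    ∃ g : GL (Fin n) ℚ_[p], ∀ x ∈ G,
      g⁻¹ * x * g ∈
        (Units.map ((PadicInt.Coe.ringHom (p := p)).mapMatrix.toMonoidHom) :
          GL (Fin n) ℤ_[p] →* GL (Fin n) ℚ_[p]).range := by
  have := GeneralLinearGroup.isLattice_columnSpan (GeneralLinearGroup.fg_columnSpan_of_isCompact hG)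
  obtain ⟨g, hg⟩ := IsLattice.exists_conj_mem_range (GeneralLinearGroup.columnSpan ℤ_[p] G)
  exact ⟨g, fun x hx => hg x (fun _ => GeneralLinearGroup.mulVec_mem_columnSpan hx)
    (fun _ => GeneralLinearGroup.mulVec_mem_columnSpan (inv_mem hx))⟩
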